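/- For y₁, y₂ ∈ [0,2) the following are equivalent: (i) there exists k ∈ ℤ with y₂ − φ^{3k}·y₁ ∈ 2ℤ[φ] (i.e. y₁ and y₂ lie in the same orbit of the group of maps x ↦ φ^{3k}x + b, b ∈ 2ℤ[φ], acting on ℝ/2ℤ); (ii) there exist integers n₁, n₂ ≥ 1 such that R^{n₁}(y₁) = R^{n₂}(y₂). -/

import Mathlib

/-!
Every branch of `R` has the form `x ↦ φ^{3e} x + b` with `e ∈ {0, 1}` and `b ∈ 2ℤ[φ]`, so the
iterates of `R` stay in an orbit: this is (ii) ⇒ (i).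

For (i) ⇒ (ii), compose each translation branch of `R` with the branch of slope `φ³` into which
it maps; the resulting map `accel` has slope `φ³` everywhere. Iterating `accel` on `y₁` and `y₂`
suitably often gives two points whose difference `x` lies in `2ℤ[φ]`. A further step of `accel`
multiplies `x` by `φ³` up to a bounded element of `2ℤ[φ]`, hence multiplies its Galois conjugate
`σ x` by `ψ³ = 3 - 2φ` (of modulus `< 1/4`) up to a bounded error. So eventually `|x| < 2` and
`|σ x| ≤ 2φ + 3`, which forces `x ∈ {0, ±(2φ - 2), ±(4 - 2φ)}`. A difference `2φ - 2` vanishes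
after one step; a difference `4 - 2φ` vanishes or becomes `2φ - 2`, except near the repelling
fixed point `φ - 1` of `accel ∘ accel`, where the pair is swapped and pushed away at rate `φ³`.
-/

open Set

noncomputable section

/-- The golden ratio `(1+√5)/2`. -/
def gold : ℝ := (1 + Real.sqrt 5) / 2

/-- The set `2ℤ[φ]`. -/
def twoZgold : Set ℝ := {x | ∃ m n : ℤ, x = 2 * m + 2 * n * gold}

/-- The renormalization map `R` on `[0,2)`. -/
def Rmap (y : ℝ) : ℝ :=
  if y < 2 - gold then gold ^ 3 * y
  else if y < 4 - 2 * gold then y + 2 * gold - 2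
  else if y < 2 * gold - 2 then gold ^ 3 * y - 2 * gold
  else if y < gold then y - 2 * gold + 2
  else gold ^ 3 * y - 4 * gold

open Real
open scoped goldenRatio

lemma gold_sq : gold ^ 2 = gold + 1 := goldenRatio_sq

lemma gold_cube : gold ^ 3 = 2 * gold + 1 := by linear_combination (gold + 1) * gold_sq

lemma goldenConj_eq : ψ = 1 - gold := one_sub_goldenConj.symm

lemma gold_ne_zero : gold ≠ 0 := goldenRatio_ne_zero

lemma goldenConj_cube : ψ ^ 3 = 3 - 2 * gold := by
  linear_combination (ψ + 1) * goldenConj_sq + 2 * goldenConj_eq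

lemma gold_bounds : 1.6 < gold ∧ gold < 1.625 := by
  have h5 : √5 ^ 2 = 5 := sq_sqrt (by norm_num)
  have := sqrt_nonneg 5
  constructor <;> unfold gold <;> nlinarith

/-- `d ∈ 2ℤ[φ]` and `d' = σ d`, where `σ` is the Galois conjugation `φ ↦ ψ`. -/
def IsLatticePair (d d' : ℝ) : Prop :=
  ∃ m n : ℤ, d = 2 * m + 2 * n * gold ∧ d' = 2 * m + 2 * n * ψ

lemma mem_twoZgold_iff {d : ℝ} : d ∈ twoZgold ↔ ∃ d', IsLatticePair d d' :=
  ⟨fun ⟨m, n, h⟩ ↦ ⟨_, m, n, h, rfl⟩, fun ⟨_, m, n, h, _⟩ ↦ ⟨m, n, h⟩⟩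

namespace IsLatticePair

variable {d d' e e' : ℝ}

lemma add (h : IsLatticePair d d') (h' : IsLatticePair e e') :
    IsLatticePair (d + e) (d' + e') := by
  obtain ⟨m, n, rfl, rfl⟩ := h
  obtain ⟨m', n', rfl, rfl⟩ := h'
  exact ⟨m + m', n + n', by push_cast; ring, by push_cast; ring⟩

lemma neg (h : IsLatticePair d d') : IsLatticePair (-d) (-d') := by
  obtain ⟨m, n, rfl, rfl⟩ := h
  exact ⟨-m, -n, by push_cast; ring, by push_cast; ring⟩

lemma sub (h : IsLatticePair d d') (h' : IsLatticePair e e') :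
    IsLatticePair (d - e) (d' - e') := by
  simpa only [sub_eq_add_neg] using h.add h'.neg

lemma gold_mul (h : IsLatticePair d d') : IsLatticePair (gold * d) (ψ * d') := by
  obtain ⟨m, n, rfl, rfl⟩ := h
  exact ⟨n, m + n, by push_cast; linear_combination 2 * n * gold_sq,
    by push_cast; linear_combination 2 * n * goldenConj_sq⟩

lemma gold_inv_mul (h : IsLatticePair d d') : IsLatticePair (gold⁻¹ * d) (ψ⁻¹ * d') := by
  obtain ⟨m, n, rfl, rfl⟩ := h
  refine ⟨n - m, m, ?_, ?_⟩
  · rw [show gold⁻¹ = φ⁻¹ from rfl, inv_goldenRatio, goldenConj_eq]; push_cast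
    linear_combination 2 * n * gold_sq
  · rw [inv_goldenConj, ← one_sub_goldenRatio]; push_cast
    linear_combination 2 * n * goldenConj_sq

lemma gold_zpow_mul (h : IsLatticePair d d') (k : ℤ) :
    IsLatticePair (gold ^ k * d) (ψ ^ k * d') := by
  induction k using Int.induction_on with
  | zero => simpa using h
  | succ k ih =>
    rw [zpow_add_one₀ gold_ne_zero, zpow_add_one₀ goldenConj_ne_zero, mul_comm _ gold,
      mul_comm _ ψ, mul_assoc, mul_assoc]
    exact ih.gold_mul
  | pred k ih =>
    rw [zpow_sub_one₀ gold_ne_zero, zpow_sub_one₀ goldenConj_ne_zero, mul_comm _ gold⁻¹,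
      mul_comm _ ψ⁻¹, mul_assoc, mul_assoc]
    exact ih.gold_inv_mul

end IsLatticePair

lemma twoZgold_add {d e : ℝ} (hd : d ∈ twoZgold) (he : e ∈ twoZgold) :
    d + e ∈ twoZgold := by
  obtain ⟨d', hd⟩ := mem_twoZgold_iff.1 hd
  obtain ⟨e', he⟩ := mem_twoZgold_iff.1 he
  exact mem_twoZgold_iff.2 ⟨_, hd.add he⟩

lemma neg_mem_twoZgold {d : ℝ} (hd : d ∈ twoZgold) : -d ∈ twoZgold := by
  obtain ⟨d', hd⟩ := mem_twoZgold_iff.1 hd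
  exact mem_twoZgold_iff.2 ⟨_, hd.neg⟩

lemma gold_zpow_mul_mem_twoZgold {d : ℝ} (hd : d ∈ twoZgold) (k : ℤ) :
    gold ^ k * d ∈ twoZgold := by
  obtain ⟨d', hd⟩ := mem_twoZgold_iff.1 hd
  exact mem_twoZgold_iff.2 ⟨_, hd.gold_zpow_mul k⟩

def OrbitRel (k : ℤ) (y₁ y₂ : ℝ) : Prop := y₂ - gold ^ (3 * k) * y₁ ∈ twoZgold

namespace OrbitRel

variable {k j : ℤ} {y₁ y₂ y₃ : ℝ}

lemma refl (y : ℝ) : OrbitRel 0 y y := ⟨0, 0, by simp⟩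

lemma symm (h : OrbitRel k y₁ y₂) : OrbitRel (-k) y₂ y₁ := by
  have := gold_zpow_mul_mem_twoZgold (neg_mem_twoZgold h) (-(3 * k))
  unfold OrbitRel
  convert this using 1
  rw [mul_neg, neg_sub, mul_sub, ← mul_assoc, ← zpow_add₀ gold_ne_zero]; simp

lemma trans (h : OrbitRel k y₁ y₂) (h' : OrbitRel j y₂ y₃) : OrbitRel (k + j) y₁ y₃ := by
  have := twoZgold_add h' (gold_zpow_mul_mem_twoZgold h (3 * j))
  unfold OrbitRel
  convert this using 1
  rw [mul_add, zpow_add₀ gold_ne_zero]; ring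

end OrbitRel

lemma orbitRel_zero {y₁ y₂ : ℝ} : OrbitRel 0 y₁ y₂ ↔ y₂ - y₁ ∈ twoZgold := by
  simp [OrbitRel]

lemma orbitRel_one {y₁ y₂ : ℝ} : OrbitRel 1 y₁ y₂ ↔ y₂ - gold ^ 3 * y₁ ∈ twoZgold := by
  simp [OrbitRel]

lemma exists_orbitRel_Rmap (y : ℝ) : ∃ k, OrbitRel k y (Rmap y) := by
  unfold Rmap
  split_ifs
  · exact ⟨1, orbitRel_one.2 ⟨0, 0, by simp⟩⟩
  · exact ⟨0, orbitRel_zero.2 ⟨-1, 1, by push_cast; ring⟩⟩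
  · exact ⟨1, orbitRel_one.2 ⟨0, -1, by push_cast; ring⟩⟩
  · exact ⟨0, orbitRel_zero.2 ⟨1, -1, by push_cast; ring⟩⟩
  · exact ⟨1, orbitRel_one.2 ⟨0, -2, by push_cast; ring⟩⟩

lemma exists_orbitRel_Rmap_iterate (y : ℝ) (n : ℕ) : ∃ k, OrbitRel k y (Rmap^[n] y) := by
  induction n with
  | zero => exact ⟨0, OrbitRel.refl y⟩
  | succ n ih =>
    obtain ⟨k, hk⟩ := ih
    obtain ⟨j, hj⟩ := exists_orbitRel_Rmap (Rmap^[n] y)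
    exact ⟨k + j, Function.iterate_succ_apply' Rmap n y ▸ hk.trans hj⟩

def accel (y : ℝ) : ℝ :=
  if y < 2 - gold then gold ^ 3 * y
  else if y < 4 - 2 * gold then gold ^ 3 * y + 2 - 2 * gold
  else if y < 2 * gold - 2 then gold ^ 3 * y - 2 * gold
  else if y < gold then gold ^ 3 * y - 2 * gold - 2
  else gold ^ 3 * y - 4 * gold

lemma accel_mem_Ico {y : ℝ} (hy : y ∈ Ico (0 : ℝ) 2) : accel y ∈ Ico (0 : ℝ) 2 := by
  obtain ⟨gl, gu⟩ := gold_bounds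
  obtain ⟨h0, h2⟩ := hy
  have := gold_sq
  simp only [accel, gold_cube]
  split_ifs <;> constructor <;> nlinarith

lemma accel_iterate_mem_Ico {y : ℝ} (hy : y ∈ Ico (0 : ℝ) 2) (t : ℕ) :
    accel^[t] y ∈ Ico (0 : ℝ) 2 := by
  induction t with
  | zero => exact hy
  | succ t ih => rw [Function.iterate_succ_apply']; exact accel_mem_Ico ih

lemma accel_eq_Rmap_or {y : ℝ} (hy : y ∈ Ico (0 : ℝ) 2) :
    accel y = Rmap y ∨ accel y = Rmap (Rmap y) := by
  obtain ⟨gl, gu⟩ := gold_bounds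
  obtain ⟨h0, h2⟩ := hy
  have := gold_sq
  simp only [accel, Rmap, gold_cube]
  split_ifs <;> first | (left; ring1) | (right; ring_nf; linarith)

lemma exists_Rmap_iterate_eq_accel_iterate {y : ℝ} (hy : y ∈ Ico (0 : ℝ) 2) (t : ℕ) :
    ∃ n, t ≤ n ∧ accel^[t] y = Rmap^[n] y := by
  induction t with
  | zero => exact ⟨0, le_rfl, rfl⟩
  | succ t ih =>
    obtain ⟨n, htn, hn⟩ := ih
    rw [Function.iterate_succ_apply']
    rcases accel_eq_Rmap_or (accel_iterate_mem_Ico hy t) with h | h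
    · exact ⟨n + 1, by omega, by rw [h, hn, Function.iterate_succ_apply']⟩
    · exact ⟨n + 2, by omega, by rw [h, hn, Function.iterate_succ_apply',
        Function.iterate_succ_apply']⟩

lemma exists_accel_sub_gold_cube_mul (y : ℝ) :
    ∃ ℓ', IsLatticePair (accel y - gold ^ 3 * y) ℓ' ∧ 2 * gold - 4 ≤ ℓ' ∧ ℓ' ≤ 2 * gold := by
  suffices ∃ m n : ℤ, accel y - gold ^ 3 * y = 2 * m + 2 * n * gold ∧
      2 * gold - 4 ≤ 2 * m + 2 * n * ψ ∧ 2 * m + 2 * n * ψ ≤ 2 * gold by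
    obtain ⟨m, n, h, hℓ⟩ := this
    exact ⟨_, ⟨m, n, h, rfl⟩, hℓ⟩
  obtain ⟨gl, gu⟩ := gold_bounds
  simp only [accel, goldenConj_eq]
  split_ifs <;> [refine ⟨0, 0, ?_⟩; refine ⟨1, -1, ?_⟩; refine ⟨0, -1, ?_⟩;
    refine ⟨-1, -1, ?_⟩; refine ⟨0, -2, ?_⟩] <;>
  · push_cast; exact ⟨by ring, by linarith, by linarith⟩

lemma orbitRel_accel (y : ℝ) : OrbitRel 1 y (accel y) := by
  obtain ⟨ℓ', h, -⟩ := exists_accel_sub_gold_cube_mul y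
  exact orbitRel_one.2 (mem_twoZgold_iff.2 ⟨ℓ', h⟩)

lemma orbitRel_accel_iterate (y : ℝ) (t : ℕ) : OrbitRel t y (accel^[t] y) := by
  induction t with
  | zero => exact OrbitRel.refl y
  | succ t ih =>
    rw [Function.iterate_succ_apply']
    exact_mod_cast ih.trans (orbitRel_accel _)

def AccelMeet (y₁ y₂ : ℝ) : Prop := ∃ t₁ t₂ : ℕ, accel^[t₁] y₁ = accel^[t₂] y₂

namespace AccelMeet

variable {y₁ y₂ : ℝ}

lemma of_eq (h : y₁ = y₂) : AccelMeet y₁ y₂ := ⟨0, 0, h⟩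

lemma symm (h : AccelMeet y₁ y₂) : AccelMeet y₂ y₁ :=
  let ⟨t₁, t₂, h⟩ := h; ⟨t₂, t₁, h.symm⟩

lemma of_accel (h : AccelMeet (accel y₁) (accel y₂)) : AccelMeet y₁ y₂ :=
  let ⟨t₁, t₂, h⟩ := h; ⟨t₁ + 1, t₂ + 1, h⟩

lemma of_iterate {a b : ℕ} (h : AccelMeet (accel^[a] y₁) (accel^[b] y₂)) :
    AccelMeet y₁ y₂ := by
  obtain ⟨t₁, t₂, h⟩ := h
  exact ⟨t₁ + a, t₂ + b, by rwa [Function.iterate_add_apply, Function.iterate_add_apply]⟩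

lemma exists_Rmap_iterate_eq (h : AccelMeet y₁ y₂) (h₁ : y₁ ∈ Ico (0 : ℝ) 2)
    (h₂ : y₂ ∈ Ico (0 : ℝ) 2) :
    ∃ n₁ n₂ : ℕ, 1 ≤ n₁ ∧ 1 ≤ n₂ ∧ Rmap^[n₁] y₁ = Rmap^[n₂] y₂ := by
  obtain ⟨t₁, t₂, h⟩ := h
  obtain ⟨n₁, hn₁, e₁⟩ := exists_Rmap_iterate_eq_accel_iterate h₁ (t₁ + 1)
  obtain ⟨n₂, hn₂, e₂⟩ := exists_Rmap_iterate_eq_accel_iterate h₂ (t₂ + 1)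
  refine ⟨n₁, n₂, by omega, by omega, ?_⟩
  rw [← e₁, ← e₂, Function.iterate_succ_apply', Function.iterate_succ_apply', h]

end AccelMeet

lemma accel_add_two_gold_sub_two {x : ℝ} (h0 : 0 ≤ x) (h2 : x + (2 * gold - 2) < 2) :
    accel (x + (2 * gold - 2)) = accel x := by
  obtain ⟨gl, gu⟩ := gold_bounds
  have := gold_sq
  simp only [accel, gold_cube]
  split_ifs <;> ring_nf <;> linarith

lemma accelMeet_add_two_gold_sub_two {x : ℝ} (h0 : 0 ≤ x) (h2 : x + (2 * gold - 2) < 2) :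
    AccelMeet x (x + (2 * gold - 2)) :=
  AccelMeet.of_accel (.of_eq (accel_add_two_gold_sub_two h0 h2).symm)

lemma accel_add_four_sub_two_gold {x : ℝ} (h0 : 0 ≤ x) (h2 : x + (4 - 2 * gold) < 2) :
    accel (x + (4 - 2 * gold)) = accel x ∨
    accel (x + (4 - 2 * gold)) = accel x + (2 * gold - 2) ∨
    (accel x = accel (x + (4 - 2 * gold)) + (4 - 2 * gold) ∧
      accel (x + (4 - 2 * gold)) - (gold - 1) = gold ^ 3 * (x - (gold - 1))) := by
  obtain ⟨gl, gu⟩ := gold_bounds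
  have := gold_sq
  simp only [accel, gold_cube]
  split_ifs <;> ring_nf <;> first
    | (left; linarith) | (right; left; linarith) | (right; right; constructor <;> linarith)

lemma accelMeet_add_four_sub_two_gold_of_le (N : ℕ) {x : ℝ} (h0 : 0 ≤ x)
    (h2 : x + (4 - 2 * gold) < 2) (hN : 2 ≤ (gold ^ 3) ^ N * |x - (gold - 1)|) :
    AccelMeet x (x + (4 - 2 * gold)) := by
  obtain ⟨gl, gu⟩ := gold_bounds
  induction N generalizing x with
  | zero =>
    rw [pow_zero, one_mul, le_abs] at hN
    exfalso; rcases hN with hN | hN <;> linarith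
  | succ N ih =>
    have hx : x ∈ Ico (0 : ℝ) 2 := ⟨h0, by linarith⟩
    have hxδ : x + (4 - 2 * gold) ∈ Ico (0 : ℝ) 2 := ⟨by linarith, h2⟩
    refine AccelMeet.of_accel ?_
    rcases accel_add_four_sub_two_gold h0 h2 with h | h | ⟨h, hrep⟩
    · exact .of_eq h.symm
    · rw [h]
      exact accelMeet_add_two_gold_sub_two (accel_mem_Ico hx).1 (h ▸ (accel_mem_Ico hxδ).2)
    · rw [h]
      refine (ih (accel_mem_Ico hxδ).1 (h ▸ (accel_mem_Ico hx).2) ?_).symm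
      rwa [hrep, abs_mul, abs_of_pos (by positivity), ← mul_assoc, ← pow_succ]

lemma accelMeet_add_four_sub_two_gold {x : ℝ} (h0 : 0 ≤ x) (h2 : x + (4 - 2 * gold) < 2) :
    AccelMeet x (x + (4 - 2 * gold)) := by
  by_cases hfix : x = gold - 1
  · refine ⟨1, 0, ?_⟩
    obtain ⟨gl, gu⟩ := gold_bounds
    have := gold_sq
    subst hfix
    simp only [Function.iterate_one, Function.iterate_zero_apply, accel, gold_cube]
    split_ifs <;> ring_nf <;> linarith
  · have hpos : 0 < |x - (gold - 1)| := abs_pos.2 (sub_ne_zero.2 hfix)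
    obtain ⟨N, hN⟩ := pow_unbounded_of_one_lt (2 / |x - (gold - 1)|)
      (one_lt_pow₀ one_lt_goldenRatio three_ne_zero)
    exact accelMeet_add_four_sub_two_gold_of_le N h0 h2 ((div_le_iff₀ hpos).1 hN.le)

lemma IsLatticePair.eq_of_abs_lt {d d' : ℝ} (h : IsLatticePair d d') (hd : |d| < 2)
    (hd' : |d'| ≤ 2 * gold + 3) :
    d = 0 ∨ d = 2 * gold - 2 ∨ d = 2 - 2 * gold ∨ d = 4 - 2 * gold ∨ d = 2 * gold - 4 := by
  obtain ⟨m, n, rfl, rfl⟩ := h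
  obtain ⟨gl, gu⟩ := gold_bounds
  rw [goldenConj_eq] at hd'
  obtain ⟨hd₁, hd₂⟩ := abs_lt.1 hd
  obtain ⟨hd'₁, hd'₂⟩ := abs_le.1 hd'
  -- `d - d' = 2 n √5` bounds `n`; then `d` bounds `m`.
  have hn₁ : n < 2 := by
    by_contra! hn
    have : (2 : ℝ) ≤ n := by exact_mod_cast hn
    nlinarith
  have hn₂ : -2 < n := by
    by_contra! hn
    have : (n : ℝ) ≤ -2 := by exact_mod_cast hn
    nlinarith
  have hm₁ : m < 3 := by
    by_contra! hm
    have : (3 : ℝ) ≤ m := by exact_mod_cast hm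
    have : (-1 : ℝ) ≤ n := by exact_mod_cast (by omega : -1 ≤ n)
    nlinarith
  have hm₂ : -3 < m := by
    by_contra! hm
    have : (m : ℝ) ≤ -3 := by exact_mod_cast hm
    have : (n : ℝ) ≤ 1 := by exact_mod_cast (by omega : n ≤ 1)
    nlinarith
  interval_cases n <;> interval_cases m <;>
    first | (exfalso; push_cast at hd₁ hd₂; linarith) | (push_cast; ring_nf; simp)

lemma accelMeet_of_isLatticePair {z₁ z₂ d' : ℝ} (hz₁ : z₁ ∈ Ico (0 : ℝ) 2)
    (hz₂ : z₂ ∈ Ico (0 : ℝ) 2) (h : IsLatticePair (z₂ - z₁) d') (hd' : |d'| ≤ 2 * gold + 3) :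
    AccelMeet z₁ z₂ := by
  obtain ⟨h₁0, h₁2⟩ := hz₁
  obtain ⟨h₂0, h₂2⟩ := hz₂
  have hd : |z₂ - z₁| < 2 := abs_sub_lt_iff.2 ⟨by linarith, by linarith⟩
  rcases h.eq_of_abs_lt hd hd' with h | h | h | h | h
  · exact .of_eq (by linarith)
  · rw [show z₂ = z₁ + (2 * gold - 2) by linarith]
    exact accelMeet_add_two_gold_sub_two h₁0 (by linarith)
  · rw [show z₁ = z₂ + (2 * gold - 2) by linarith]
    exact (accelMeet_add_two_gold_sub_two h₂0 (by linarith)).symm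
  · rw [show z₂ = z₁ + (4 - 2 * gold) by linarith]
    exact accelMeet_add_four_sub_two_gold h₁0 (by linarith)
  · rw [show z₁ = z₂ + (4 - 2 * gold) by linarith]
    exact (accelMeet_add_four_sub_two_gold h₂0 (by linarith)).symm

lemma IsLatticePair.exists_accel_sub {z₁ z₂ d' : ℝ} (h : IsLatticePair (z₂ - z₁) d') :
    ∃ e', IsLatticePair (accel z₂ - accel z₁) e' ∧ |e'| ≤ (2 * gold - 3) * |d'| + 4 := by
  obtain ⟨gl, gu⟩ := gold_bounds
  obtain ⟨ℓ₁, hℓ₁, l₁, u₁⟩ := exists_accel_sub_gold_cube_mul z₁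
  obtain ⟨ℓ₂, hℓ₂, l₂, u₂⟩ := exists_accel_sub_gold_cube_mul z₂
  refine ⟨ψ ^ 3 * d' + (ℓ₂ - ℓ₁), ?_, ?_⟩
  · convert (h.gold_zpow_mul 3).add (hℓ₂.sub hℓ₁) using 1
    · simp only [zpow_ofNat]; ring
    · simp only [zpow_ofNat]
  · calc |ψ ^ 3 * d' + (ℓ₂ - ℓ₁)| ≤ |ψ ^ 3 * d'| + |ℓ₂ - ℓ₁| := abs_add_le _ _
      _ ≤ (2 * gold - 3) * |d'| + 4 := by
        rw [abs_mul, goldenConj_cube, abs_of_neg (by linarith)]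
        linarith [abs_sub_le_iff.2 (⟨by linarith, by linarith⟩ : ℓ₂ - ℓ₁ ≤ 4 ∧ ℓ₁ - ℓ₂ ≤ 4)]

lemma IsLatticePair.exists_accel_iterate_sub {z₁ z₂ d' : ℝ} (h : IsLatticePair (z₂ - z₁) d')
    (t : ℕ) :
    ∃ e', IsLatticePair (accel^[t] z₂ - accel^[t] z₁) e' ∧
      |e'| ≤ (2 * gold - 3) ^ t * |d'| + (2 * gold + 2) := by
  -- `2φ + 2` is the fixed point of `s ↦ (2φ - 3) s + 4`.
  obtain ⟨gl, gu⟩ := gold_bounds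
  induction t with
  | zero => exact ⟨d', h, by simp only [pow_zero, one_mul]; linarith⟩
  | succ t ih =>
    obtain ⟨e', he', hbound⟩ := ih
    obtain ⟨f', hf', hstep⟩ := he'.exists_accel_sub
    refine ⟨f', by simpa only [Function.iterate_succ_apply'] using hf', ?_⟩
    calc |f'| ≤ (2 * gold - 3) * |e'| + 4 := hstep
      _ ≤ (2 * gold - 3) * ((2 * gold - 3) ^ t * |d'| + (2 * gold + 2)) + 4 := by
        gcongr; linarith
      _ = (2 * gold - 3) ^ (t + 1) * |d'| + (2 * gold + 2) := by
        rw [pow_succ]; linear_combination 4 * gold_sq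

lemma accelMeet_of_sub_mem_twoZgold {z₁ z₂ : ℝ} (hz₁ : z₁ ∈ Ico (0 : ℝ) 2)
    (hz₂ : z₂ ∈ Ico (0 : ℝ) 2) (h : z₂ - z₁ ∈ twoZgold) : AccelMeet z₁ z₂ := by
  obtain ⟨gl, gu⟩ := gold_bounds
  obtain ⟨d', hd'⟩ := mem_twoZgold_iff.1 h
  obtain ⟨t, ht⟩ := exists_pow_lt_of_lt_one (by positivity : (0 : ℝ) < 1 / (|d'| + 1))
    (by linarith : 2 * gold - 3 < 1)
  obtain ⟨e', he', hbound⟩ := hd'.exists_accel_iterate_sub t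
  refine AccelMeet.of_iterate (a := t) (b := t)
    (accelMeet_of_isLatticePair (accel_iterate_mem_Ico hz₁ t) (accel_iterate_mem_Ico hz₂ t) he' ?_)
  have hsmall : (2 * gold - 3) ^ t * |d'| ≤ 1 := by
    rw [lt_div_iff₀ (by positivity)] at ht
    nlinarith [pow_nonneg (by linarith : (0 : ℝ) ≤ 2 * gold - 3) t, abs_nonneg d']
  linarith

lemma accelMeet_of_orbitRel {y₁ y₂ : ℝ} {k : ℤ} (h₁ : y₁ ∈ Ico (0 : ℝ) 2)
    (h₂ : y₂ ∈ Ico (0 : ℝ) 2) (h : OrbitRel k y₁ y₂) : AccelMeet y₁ y₂ := by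
  have hz := ((orbitRel_accel_iterate y₁ k.toNat).symm.trans h).trans
    (orbitRel_accel_iterate y₂ (-k).toNat)
  rw [show -(k.toNat : ℤ) + k + (-k).toNat = 0 by omega, orbitRel_zero] at hz
  exact .of_iterate (accelMeet_of_sub_mem_twoZgold (accel_iterate_mem_Ico h₁ _)
    (accel_iterate_mem_Ico h₂ _) hz)

/-- Descent Lemma II: two points of `[0,2)` lie in the same `G₂⁺`-orbit iff they have a
common image under iterates of `R`. -/
theorem descent_lemma_II (y₁ y₂ : ℝ) (h₁ : y₁ ∈ Set.Ico (0 : ℝ) 2)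
    (h₂ : y₂ ∈ Set.Ico (0 : ℝ) 2) :
    (∃ k : ℤ, y₂ - gold ^ ((3 : ℤ) * k) * y₁ ∈ twoZgold) ↔
    (∃ n₁ n₂ : ℕ, 1 ≤ n₁ ∧ 1 ≤ n₂ ∧ Rmap^[n₁] y₁ = Rmap^[n₂] y₂) := by
  constructor
  · rintro ⟨k, hk⟩
    exact (accelMeet_of_orbitRel h₁ h₂ (k := k) hk).exists_Rmap_iterate_eq h₁ h₂
  · rintro ⟨n₁, n₂, -, -, h⟩
    obtain ⟨k₁, hk₁⟩ := exists_orbitRel_Rmap_iterate y₁ n₁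
    obtain ⟨k₂, hk₂⟩ := exists_orbitRel_Rmap_iterate y₂ n₂
    exact ⟨k₁ + -k₂, hk₁.trans (h ▸ hk₂.symm)⟩
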